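/- For any ordered 4-tuple (q₁,q₂,q₃,q₄) of distinct points in counterclockwise order on the unit circle, there exists a unique β with |β| < 1 such that the hyperbolic geodesic in the Poincaré disk joining q₁ to q₃ and the geodesic joining q₂ to q₄ intersect at the point -β; equivalently, g_{-β} maps the tuple into the core (g_{-β}(q₁) = -g_{-β}(q₃) and g_{-β}(q₂) = -g_{-β}(q₄)). -/

import Mathlib

/-!
`g_α` makes `z` and `z'` antipodal exactly when `α` lies on the geodesic `zz'`. Through the
Poincaré-to-Klein map `α ↦ 2α / (1 + |α|²)`, a bijection of the open disk, geodesics become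
straight chords and this condition becomes linear in the Klein point. The chords `q₁q₃` and
`q₂q₄` meet in exactly one point, and it lies in the open disk because
`|q₁q₃ - q₂q₄|² - |q₁ + q₃ - q₂ - q₄|²` is `16` times the product of the sines of half the
arcs `q₁q₂`, `q₁q₄`, `q₂q₃`, `q₃q₄`, which is positive for interleaved endpoints.
-/

open Complex

/-- The special Möbius transformation `g_β`. -/
noncomputable def moebius (β z : ℂ) : ℂ := (z - β) / (1 - (starRingEnd ℂ) β * z)

open ComplexConjugate

/-- For distinct `a`, `b` on the unit circle, the solutions `w` form the line through `a`, `b`. -/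
def OnChordLine (a b w : ℂ) : Prop := w + a * b * conj w = a + b

noncomputable def kleinOfPoincare (β : ℂ) : ℂ := 2 * β / (1 + ‖β‖ ^ 2 : ℝ)

lemma one_sub_conj_mul_ne_zero {α z : ℂ} (hα : ‖α‖ < 1) (hz : ‖z‖ ≤ 1) :
    1 - conj α * z ≠ 0 := by
  refine sub_ne_zero.2 fun h => ?_
  have : ‖conj α * z‖ < 1 := by
    rw [norm_mul, norm_conj]
    exact lt_of_le_of_lt (mul_le_of_le_one_right (norm_nonneg α) hz) hα
  rw [← h, norm_one] at this
  exact lt_irrefl _ this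

lemma moebius_eq_neg_moebius_iff {α z z' : ℂ} (hα : ‖α‖ < 1) (hz : ‖z‖ ≤ 1) (hz' : ‖z'‖ ≤ 1) :
    moebius α z = -moebius α z' ↔ OnChordLine z z' (kleinOfPoincare α) := by
  rw [moebius, moebius, ← neg_div, div_eq_div_iff (one_sub_conj_mul_ne_zero hα hz)
    (one_sub_conj_mul_ne_zero hα hz'), OnChordLine, kleinOfPoincare, map_div₀, map_mul,
    conj_ofReal, map_ofNat]
  have hne : ((1 + ‖α‖ ^ 2 : ℝ) : ℂ) ≠ 0 := by exact_mod_cast (by positivity : 1 + ‖α‖ ^ 2 ≠ 0)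
  field_simp
  push_cast
  rw [← conj_mul']
  constructor <;> intro h <;> linear_combination -h

lemma norm_kleinOfPoincare (β : ℂ) : ‖kleinOfPoincare β‖ = 2 * ‖β‖ / (1 + ‖β‖ ^ 2) := by
  rw [kleinOfPoincare, norm_div, norm_mul, norm_real, Real.norm_of_nonneg (by positivity)]
  norm_num

lemma kleinOfPoincare_injOn : Set.InjOn kleinOfPoincare (Metric.ball 0 1) := by
  intro β hβ β' hβ' h
  rw [mem_ball_zero_iff] at hβ hβ'
  have hpos : ∀ t : ℝ, 0 < 1 + t ^ 2 := fun t => by positivity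
  have hnorm : ‖β‖ = ‖β'‖ := by
    have h' := congrArg norm h
    rw [norm_kleinOfPoincare, norm_kleinOfPoincare, div_eq_div_iff (hpos _).ne' (hpos _).ne'] at h'
    have : (‖β‖ - ‖β'‖) * (1 - ‖β‖ * ‖β'‖) = 0 := by linear_combination h' / 2
    have hlt : ‖β‖ * ‖β'‖ < 1 := by nlinarith [norm_nonneg β, norm_nonneg β']
    exact sub_eq_zero.1 ((mul_eq_zero.1 this).resolve_right (by linarith))
  rw [kleinOfPoincare, kleinOfPoincare, hnorm] at h
  have hne : ((1 + ‖β'‖ ^ 2 : ℝ) : ℂ) ≠ 0 := by exact_mod_cast (hpos _).ne'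
  exact mul_left_cancel₀ two_ne_zero ((div_left_inj' hne).1 h)

lemma kleinOfPoincare_surjOn : Set.SurjOn kleinOfPoincare (Metric.ball 0 1) (Metric.ball 0 1) := by
  intro w hw
  rw [mem_ball_zero_iff] at hw
  set r := √(1 - ‖w‖ ^ 2)
  have hr : r ^ 2 = 1 - ‖w‖ ^ 2 := Real.sq_sqrt (by nlinarith [norm_nonneg w])
  have hr0 : 0 ≤ r := Real.sqrt_nonneg _
  have hnorm : ‖w / (1 + r : ℝ)‖ = ‖w‖ / (1 + r) := by
    rw [norm_div, norm_real, Real.norm_of_nonneg (by positivity)]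
  refine ⟨w / (1 + r : ℝ), ?_, ?_⟩
  · rw [mem_ball_zero_iff, hnorm, div_lt_one (by positivity)]
    linarith
  · have hden : 1 + ‖w / (1 + r : ℝ)‖ ^ 2 = 2 / (1 + r) := by
      rw [hnorm]
      field_simp
      linear_combination hr
    rw [kleinOfPoincare, hden]
    have : (1 + r : ℂ) ≠ 0 := by exact_mod_cast (by positivity : (1 + r : ℝ) ≠ 0)
    push_cast
    field_simp

lemma OnChordLine.mul_conj_eq {a b c d w : ℂ} (hac : OnChordLine a c w) (hbd : OnChordLine b d w) :
    (a * c - b * d) * conj w = a + c - b - d := by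
  unfold OnChordLine at hac hbd
  linear_combination hac - hbd

lemma exists_onChordLine_inter {a b c d : ℂ} (ha : ‖a‖ = 1) (hb : ‖b‖ = 1) (hc : ‖c‖ = 1)
    (hd : ‖d‖ = 1) (h : a * c ≠ b * d) : ∃ w, OnChordLine a c w ∧ OnChordLine b d w := by
  have hsub : a * c - b * d ≠ 0 := sub_ne_zero.2 h
  have := ne_zero_of_norm_ne_zero (a := a) (by simp [ha])
  have := ne_zero_of_norm_ne_zero (a := b) (by simp [hb])
  have := ne_zero_of_norm_ne_zero (a := c) (by simp [hc])
  have := ne_zero_of_norm_ne_zero (a := d) (by simp [hd])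
  refine ⟨conj ((a + c - b - d) / (a * c - b * d)), ?_, ?_⟩ <;>
  · simp only [OnChordLine, conj_conj, map_div₀, map_sub, map_add, map_mul]
    rw [← inv_eq_conj ha, ← inv_eq_conj hb, ← inv_eq_conj hc, ← inv_eq_conj hd]
    field_simp
    ring

lemma norm_mul_sub_sq_sub_norm_add_sub_sq {a b c d : ℂ} (ha : ‖a‖ = 1) (hb : ‖b‖ = 1)
    (hc : ‖c‖ = 1) (hd : ‖d‖ = 1) :
    ((‖a * c - b * d‖ ^ 2 - ‖a + c - b - d‖ ^ 2 : ℝ) : ℂ) * (a * b * c * d) =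
      -((a - b) * (a - d) * (c - b) * (c - d)) := by
  have := ne_zero_of_norm_ne_zero (a := a) (by simp [ha])
  have := ne_zero_of_norm_ne_zero (a := b) (by simp [hb])
  have := ne_zero_of_norm_ne_zero (a := c) (by simp [hc])
  have := ne_zero_of_norm_ne_zero (a := d) (by simp [hd])
  push_cast
  simp only [← mul_conj', map_sub, map_add, map_mul]
  rw [← inv_eq_conj ha, ← inv_eq_conj hb, ← inv_eq_conj hc, ← inv_eq_conj hd]
  field_simp
  ring

lemma exp_mul_I_sub_exp_mul_I (φ ψ : ℝ) :
    exp (φ * I) - exp (ψ * I) = 2 * I * Real.sin ((φ - ψ) / 2) * exp ((φ + ψ) / 2 * I) := by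
  have hφ : exp (φ * I) = exp ((φ - ψ) / 2 * I) * exp ((φ + ψ) / 2 * I) := by
    rw [← exp_add]; ring_nf
  have hψ : exp (ψ * I) = exp (-((φ - ψ) / 2) * I) * exp ((φ + ψ) / 2 * I) := by
    rw [← exp_add]; ring_nf
  rw [hφ, hψ, ofReal_sin, Complex.sin]
  push_cast
  linear_combination
    (exp ((↑φ - ↑ψ) / 2 * I) - exp (-((↑φ - ↑ψ) / 2) * I)) * exp ((↑φ + ↑ψ) / 2 * I) * I_sq

lemma neg_prod_exp_mul_I_sub (φ₁ φ₂ φ₃ φ₄ : ℝ) :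
    -((exp (φ₁ * I) - exp (φ₂ * I)) * (exp (φ₁ * I) - exp (φ₄ * I)) *
      (exp (φ₃ * I) - exp (φ₂ * I)) * (exp (φ₃ * I) - exp (φ₄ * I))) =
      (16 * Real.sin ((φ₂ - φ₁) / 2) * Real.sin ((φ₄ - φ₁) / 2) * Real.sin ((φ₃ - φ₂) / 2) *
        Real.sin ((φ₄ - φ₃) / 2) : ℝ) *
      (exp (φ₁ * I) * exp (φ₂ * I) * exp (φ₃ * I) * exp (φ₄ * I)) := by
  have hswap : ∀ x y : ℝ, Real.sin ((x - y) / 2) = -Real.sin ((y - x) / 2) := fun x y => by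
    rw [← Real.sin_neg]; ring_nf
  have hexp : exp ((φ₁ + φ₂) / 2 * I) * exp ((φ₁ + φ₄) / 2 * I) * exp ((φ₃ + φ₂) / 2 * I) *
      exp ((φ₃ + φ₄) / 2 * I) = exp (φ₁ * I) * exp (φ₂ * I) * exp (φ₃ * I) * exp (φ₄ * I) := by
    simp only [← exp_add]; ring_nf
  simp only [exp_mul_I_sub_exp_mul_I]
  rw [hswap φ₁ φ₂, hswap φ₁ φ₄, hswap φ₃ φ₄, ← hexp]
  simp only [ofReal_mul, ofReal_neg, ofReal_ofNat]
  linear_combination (16 * Real.sin ((φ₂ - φ₁) / 2) * Real.sin ((φ₄ - φ₁) / 2) *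
    Real.sin ((φ₃ - φ₂) / 2) * Real.sin ((φ₄ - φ₃) / 2)) * exp ((φ₁ + φ₂) / 2 * I) *
    exp ((φ₁ + φ₄) / 2 * I) * exp ((φ₃ + φ₂) / 2 * I) * exp ((φ₃ + φ₄) / 2 * I) * (I ^ 2 - 1) * I_sq

lemma norm_add_sub_lt_norm_mul_sub_of_cyclic {q : ℂ} (hq : ‖q‖ = 1) {φ₁ φ₂ φ₃ φ₄ : ℝ}
    (h12 : φ₁ < φ₂) (h23 : φ₂ < φ₃) (h34 : φ₃ < φ₄) (h41 : φ₄ < φ₁ + 2 * Real.pi) :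
    ‖q * exp (φ₁ * I) + q * exp (φ₃ * I) - q * exp (φ₂ * I) - q * exp (φ₄ * I)‖ <
      ‖q * exp (φ₁ * I) * (q * exp (φ₃ * I)) - q * exp (φ₂ * I) * (q * exp (φ₄ * I))‖ := by
  have hsin : ∀ {x y : ℝ}, x < y → y < x + 2 * Real.pi → 0 < Real.sin ((y - x) / 2) :=
    fun h0 h1 => Real.sin_pos_of_pos_of_lt_pi (by linarith) (by linarith)
  set S := 16 * Real.sin ((φ₂ - φ₁) / 2) * Real.sin ((φ₄ - φ₁) / 2) *
      Real.sin ((φ₃ - φ₂) / 2) * Real.sin ((φ₄ - φ₃) / 2)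
  have hS : 0 < S := by
    have := hsin h12 (by linarith); have := hsin (h12.trans (h23.trans h34)) h41
    have := hsin h23 (by linarith); have := hsin h34 (by linarith)
    positivity
  have hunit : ∀ φ : ℝ, ‖q * exp (φ * I)‖ = 1 := fun φ => by
    rw [norm_mul, hq, norm_exp_ofReal_mul_I, one_mul]
  have hdiff := norm_mul_sub_sq_sub_norm_add_sub_sq (hunit φ₁) (hunit φ₂) (hunit φ₃) (hunit φ₄)
  have hprod :
      q * exp (φ₁ * I) * (q * exp (φ₂ * I)) * (q * exp (φ₃ * I)) * (q * exp (φ₄ * I)) ≠ 0 := by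
    simp only [ne_eq, mul_eq_zero, exp_ne_zero, or_false, or_self]
    exact norm_ne_zero_iff.1 (by simp [hq])
  rw [show -((q * exp (φ₁ * I) - q * exp (φ₂ * I)) * (q * exp (φ₁ * I) - q * exp (φ₄ * I)) *
      (q * exp (φ₃ * I) - q * exp (φ₂ * I)) * (q * exp (φ₃ * I) - q * exp (φ₄ * I))) =
      S * (q * exp (φ₁ * I) * (q * exp (φ₂ * I)) * (q * exp (φ₃ * I)) * (q * exp (φ₄ * I))) by
    linear_combination q ^ 4 * neg_prod_exp_mul_I_sub φ₁ φ₂ φ₃ φ₄] at hdiff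
  have := ofReal_injective (mul_right_cancel₀ hprod hdiff)
  refine lt_of_pow_lt_pow_left₀ 2 (norm_nonneg _) ?_
  linarith

theorem existsUnique_moebius_eq_neg_moebius {a b c d : ℂ} (ha : ‖a‖ = 1) (hb : ‖b‖ = 1)
    (hc : ‖c‖ = 1) (hd : ‖d‖ = 1) (h : ‖a + c - b - d‖ < ‖a * c - b * d‖) :
    ∃! α : ℂ, ‖α‖ < 1 ∧ moebius α a = -moebius α c ∧ moebius α b = -moebius α d := by
  have hne : a * c - b * d ≠ 0 := norm_pos_iff.1 ((norm_nonneg _).trans_lt h)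
  have hchord : ∀ {α : ℂ}, ‖α‖ < 1 →
      ((moebius α a = -moebius α c ∧ moebius α b = -moebius α d) ↔
        OnChordLine a c (kleinOfPoincare α) ∧ OnChordLine b d (kleinOfPoincare α)) := fun hα => by
    rw [moebius_eq_neg_moebius_iff hα ha.le hc.le, moebius_eq_neg_moebius_iff hα hb.le hd.le]
  obtain ⟨w, hac, hbd⟩ := exists_onChordLine_inter ha hb hc hd (sub_ne_zero.1 hne)
  have hw : w ∈ Metric.ball 0 1 := by
    have hmul := congrArg norm (hac.mul_conj_eq hbd)
    rw [norm_mul, norm_conj] at hmul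
    rw [mem_ball_zero_iff]
    exact lt_of_mul_lt_mul_left (by rwa [hmul, mul_one]) (norm_nonneg _)
  obtain ⟨α, hα, rfl⟩ := kleinOfPoincare_surjOn hw
  refine ⟨α, ⟨mem_ball_zero_iff.1 hα, (hchord (mem_ball_zero_iff.1 hα)).2 ⟨hac, hbd⟩⟩, ?_⟩
  rintro β ⟨hβ, hβα⟩
  obtain ⟨hac', hbd'⟩ := (hchord hβ).1 hβα
  refine kleinOfPoincare_injOn (mem_ball_zero_iff.2 hβ) hα ((starRingEnd ℂ).injective ?_)
  exact mul_left_cancel₀ hne ((hac'.mul_conj_eq hbd').trans (hac.mul_conj_eq hbd).symm)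

/-- For any 4 distinct points in counterclockwise order on the unit circle,
there is a unique `β` in the open unit disk such that `g_{-β}` carries the
tuple into the core (opposite points antipodal). -/
theorem exists_unique_moebius_to_core
    (q₁ q₂ q₃ q₄ : ℂ) (θ₂ θ₃ θ₄ : ℝ)
    (hq₁ : ‖q₁‖ = 1)
    (h2 : 0 < θ₂) (h23 : θ₂ < θ₃) (h34 : θ₃ < θ₄) (h4 : θ₄ < 2 * Real.pi)
    (hq₂ : q₂ = q₁ * Complex.exp (θ₂ * Complex.I))
    (hq₃ : q₃ = q₁ * Complex.exp (θ₃ * Complex.I))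
    (hq₄ : q₄ = q₁ * Complex.exp (θ₄ * Complex.I)) :
    ∃! β : ℂ, ‖β‖ < 1 ∧
      moebius (-β) q₁ = -(moebius (-β) q₃) ∧
      moebius (-β) q₂ = -(moebius (-β) q₄) := by
  subst hq₂ hq₃ hq₄
  have hunit : ∀ θ : ℝ, ‖q₁ * exp (θ * I)‖ = 1 := fun θ => by
    rw [norm_mul, hq₁, norm_exp_ofReal_mul_I, one_mul]
  have hcross := norm_add_sub_lt_norm_mul_sub_of_cyclic hq₁ (φ₁ := 0) h2 h23 h34 (by simpa using h4)
  simp only [ofReal_zero, zero_mul, exp_zero, mul_one] at hcross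
  refine ((Equiv.neg ℂ).existsUnique_congr fun β => ?_).2
    (existsUnique_moebius_eq_neg_moebius hq₁ (hunit θ₂) (hunit θ₃) (hunit θ₄) hcross)
  rw [Equiv.neg_apply, norm_neg]
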